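/- Let U₁,...,Uₙ be standard uniform random variables, r ∈ (-1,0) ∪ (0,∞), and w ∈ Δₙ with all wᵢ > 0. If the weighted r-mean M_r^w(U₁,...,Uₙ) = (∑ᵢ wᵢUᵢ^r)^{1/r} has the same distribution as U₁, then U₁ = U₂ = ... = Uₙ almost surely. -/

import Mathlib

open MeasureTheory Set

lemma meas_rpow_const (s : ℝ) : Measurable (fun x : ℝ => x ^ s) :=
  measurable_of_continuousOn_compl_singleton 0
    (continuousOn_id.rpow_const fun _ hx => Or.inl hx)

lemma integral_Ioo_rpow {s : ℝ} (hs : -1 < s) : ∫ x in Ioo (0:ℝ) 1, x ^ s = (s+1)⁻¹ := by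
  rw [← integral_Ioc_eq_integral_Ioo, ← intervalIntegral.integral_of_le zero_le_one,
    integral_rpow (Or.inl hs), Real.one_rpow, Real.zero_rpow (by linarith)]
  ring

lemma key_lemma {Ω : Type*} [MeasurableSpace Ω] (μ : Measure Ω)
    (V : Ω → ℝ) (hV : Measurable V) (hmap : Measure.map V μ = volume.restrict (Ioo (0:ℝ) 1))
    {s : ℝ} (hs : -1 < s) :
    Integrable (fun ω => V ω ^ s) μ ∧ ∫ ω, V ω ^ s ∂μ = (s+1)⁻¹ := by
  have hm : AEStronglyMeasurable (fun x : ℝ => x ^ s) (Measure.map V μ) :=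
    (meas_rpow_const s).aestronglyMeasurable
  constructor
  · have := (integrable_map_measure hm hV.aemeasurable).1 ?_
    · exact this
    · rw [hmap]
      exact (intervalIntegral.integrableOn_Ioo_rpow_iff one_pos).2 hs
  · rw [← integral_map hV.aemeasurable hm, hmap, integral_Ioo_rpow hs]


/-- If `U ⟨0, by omega⟩, ..., U (n-1)` are standard uniform, `r ∈ (-1,0) ∪ (0,∞)`, `w` has strictly
positive weights summing to one, and the weighted `r`-mean has the same distribution as
`U ⟨0, by omega⟩`, then `U ⟨0, by omega⟩ = U 1 = ... = U (n-1)` almost surely. -/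
theorem rmean_eq_distribution_implies_identical
    {Ω : Type*} [MeasurableSpace Ω] (μ : Measure Ω) [IsProbabilityMeasure μ]
    (n : ℕ) (hn : 2 ≤ n) (U : Fin n → Ω → ℝ)
    (hMeas : ∀ i, Measurable (U i))
    (hUnif : ∀ i, Measure.map (U i) μ = volume.restrict (Ioo (0:ℝ) 1))
    (r : ℝ) (hr : r ∈ Ioo (-1:ℝ) 0 ∪ Ioi (0:ℝ))
    (w : Fin n → ℝ) (hw : ∀ i, 0 < w i) (hw1 : ∑ i, w i = 1)
    (hdist : Measure.map (fun ω => (∑ i, w i * U i ω ^ r) ^ r⁻¹) μ = Measure.map (U ⟨0, by omega⟩) μ) :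
    ∀ᵐ ω ∂μ, ∀ i, U i ω = U ⟨0, by omega⟩ ω := by
  have : Fact (0 < n) := ⟨by omega⟩
  have hr0 : r ≠ 0 := by
    rcases hr with ⟨_, h2⟩ | h
    · exact ne_of_lt h2
    · exact ne_of_gt h
  obtain ⟨p, hp1, hsgt⟩ : ∃ p : ℝ, 1 < p ∧ -1 < r * p := by
    rcases hr with ⟨h1, h2⟩ | h
    · refine ⟨(1 - 1/r)/2, ?_, ?_⟩
      · have h3 : 1/r < -1 := by
          rw [div_lt_iff_of_neg h2]; linarith
        linarith
      · have h4 : r * ((1 - 1/r)/2) = (r-1)/2 := by field_simp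
        rw [h4]; linarith
    · have h' : 0 < r := mem_Ioi.1 h
      exact ⟨2, one_lt_two, by linarith⟩
  set s : ℝ := r * p with hs_def
  set i0 : Fin n := ⟨0, by omega⟩ with hi0
  -- a.e. all U i in (0,1)
  have hA : ∀ᵐ ω ∂μ, ∀ i, U i ω ∈ Ioo (0:ℝ) 1 := by
    rw [ae_all_iff]
    intro i
    rw [ae_iff]
    have h0 : μ (U i ⁻¹' (Ioo (0:ℝ) 1)ᶜ) = 0 := by
      rw [← Measure.map_apply (hMeas i) measurableSet_Ioo.compl, hUnif i,
        Measure.restrict_apply measurableSet_Ioo.compl]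
      simp
    exact h0
  set S : Ω → ℝ := fun ω => ∑ i, w i * U i ω ^ r with hS_def
  set T : Ω → ℝ := fun ω => S ω ^ r⁻¹ with hT_def
  have hSmeas : Measurable S :=
    Finset.measurable_sum _ fun i _ => measurable_const.mul ((meas_rpow_const r).comp (hMeas i))
  have hTmeas : Measurable T := (meas_rpow_const r⁻¹).comp hSmeas
  have hTmap : Measure.map T μ = volume.restrict (Ioo (0:ℝ) 1) := by
    rw [hT_def, hS_def]
    exact hdist.trans (hUnif i0)
  obtain ⟨hTint, hTval⟩ := key_lemma μ T hTmeas hTmap hsgt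
  have hUi := fun i => key_lemma μ (U i) (hMeas i) (hUnif i) hsgt
  -- pointwise facts on the good set
  have hSpos : ∀ ω, (∀ i, U i ω ∈ Ioo (0:ℝ) 1) → 0 < S ω := by
    intro ω hω
    haveI : Nonempty (Fin n) := ⟨⟨0, by omega⟩⟩
    refine Finset.sum_pos (fun i _ => mul_pos (hw i) (Real.rpow_pos_of_pos (hω i).1 r))
      Finset.univ_nonempty
  have hTs : ∀ ω, (∀ i, U i ω ∈ Ioo (0:ℝ) 1) → T ω ^ s = S ω ^ p := by
    intro ω hω
    have h1 : r⁻¹ * s = p := by rw [hs_def, ← mul_assoc, inv_mul_cancel₀ hr0, one_mul]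
    rw [hT_def, ← Real.rpow_mul (hSpos ω hω).le, h1]
  have hUis : ∀ ω, (∀ i, U i ω ∈ Ioo (0:ℝ) 1) → ∀ i, U i ω ^ s = (U i ω ^ r) ^ p := by
    intro ω hω i
    rw [← Real.rpow_mul (hω i).1.le]
  -- the deficit function
  set G : Ω → ℝ := fun ω => (∑ i, w i * U i ω ^ s) - T ω ^ s with hG_def
  have hsum_int : Integrable (fun ω => ∑ i, w i * U i ω ^ s) μ :=
    integrable_finset_sum _ fun i _ => ((hUi i).1.const_mul (w i))
  have hGint : Integrable G μ := hsum_int.sub hTint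
  have hGval : ∫ ω, G ω ∂μ = 0 := by
    rw [hG_def]
    simp only
    rw [integral_sub hsum_int hTint,
      integral_finset_sum _ (fun i _ => ((hUi i).1.const_mul (w i))), hTval]
    simp_rw [integral_const_mul]
    simp_rw [(hUi _).2]
    rw [← Finset.sum_mul, hw1, one_mul, sub_self]
  have hGnonneg : 0 ≤ᵐ[μ] G := by
    filter_upwards [hA] with ω hω
    have key := Real.rpow_arith_mean_le_arith_mean_rpow Finset.univ w (fun i => U i ω ^ r)
      (fun i _ => (hw i).le) hw1 (fun i _ => (Real.rpow_pos_of_pos (hω i).1 r).le) hp1.le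
    have : T ω ^ s ≤ ∑ i, w i * U i ω ^ s := by
      rw [hTs ω hω]
      calc S ω ^ p ≤ ∑ i, w i * (U i ω ^ r) ^ p := key
        _ = ∑ i, w i * U i ω ^ s := by
            refine Finset.sum_congr rfl fun i _ => ?_
            rw [hUis ω hω i]
    simpa [hG_def, Pi.zero_apply, sub_nonneg] using this
  have hG0 : G =ᵐ[μ] 0 := (integral_eq_zero_iff_of_nonneg_ae hGnonneg hGint).1 hGval
  filter_upwards [hA, hG0] with ω hω hGω
  intro i
  have hzero : (∑ j, w j * U j ω ^ s) - T ω ^ s = 0 := by simpa [hG_def] using hGω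
  have h1 : S ω ^ p = ∑ j, w j * (U j ω ^ r) ^ p := by
    rw [← hTs ω hω]
    have h2 : T ω ^ s = ∑ j, w j * U j ω ^ s := by linarith
    rw [h2]
    exact Finset.sum_congr rfl fun j _ => by rw [hUis ω hω j]
  simp only [hS_def] at h1
  have heq : (∑ j, w j • (U j ω ^ r)) ^ p = ∑ j, w j • ((U j ω ^ r) ^ p) := by
    simpa only [smul_eq_mul] using h1
  have hall := (strictConvexOn_rpow hp1).eq_of_le_map_sum
    (t := Finset.univ) (w := w) (p := fun j => U j ω ^ r)
    (fun j _ => hw j) hw1 (fun j _ => (Real.rpow_pos_of_pos (hω j).1 r).le)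
    (by rw [heq])
  have hri : U i ω ^ r = U i0 ω ^ r := hall (Finset.mem_univ i) (Finset.mem_univ i0)
  have hcongr := congrArg (fun x : ℝ => x ^ r⁻¹) hri
  simpa [Real.rpow_rpow_inv (hω i).1.le hr0, Real.rpow_rpow_inv (hω i0).1.le hr0] using hcongr
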